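/- arXiv:2305.06119 — 5 statements merged into one kernel-verified Lean document; each statement's English description precedes it below -/
import Mathlib

section
/- For all real t with 1/8 < t < 1/2, the metric (t, t, 1-2t) on SU(3)/T^2 has positive Ricci curvature: all three quantities r_x(t) = 1/(2t) - (1-2t)/(12t^2), r_y(t) = 1/(2t) - (1-2t)/(12t^2), and r_z(t) = (1/12)((1-2t)/t^2 - 2/(1-2t)) + 1/(2(1-2t)) are positive; and for 0 < t < 1/8 we have r_x(t) < 0 < r_z(t), so the Ricci tensor has mixed sign. -/
theorem stmt_4 (t : ℝ) :
    ((1/8 < t ∧ t < 1/2) →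
      (1/(2*t) - (1 - 2*t)/(12*t^2) > 0 ∧
       1/(2*t) - (1 - 2*t)/(12*t^2) > 0 ∧
       (1/12) * ((1 - 2*t)/t^2 - 2/(1 - 2*t)) + 1/(2*(1 - 2*t)) > 0)) ∧
    ((0 < t ∧ t < 1/8) →
      (1/(2*t) - (1 - 2*t)/(12*t^2) < 0 ∧
       0 < (1/12) * ((1 - 2*t)/t^2 - 2/(1 - 2*t)) + 1/(2*(1 - 2*t)))) := by
  constructor
  · rintro ⟨h1, h2⟩
    have ht : (0:ℝ) < t := by linarith
    have hz : (0:ℝ) < 1 - 2*t := by linarith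
    have hrx : 1/(2*t) - (1 - 2*t)/(12*t^2) = (8*t - 1)/(12*t^2) := by
      field_simp; ring
    have hrz : (1/12) * ((1 - 2*t)/t^2 - 2/(1 - 2*t)) + 1/(2*(1 - 2*t))
        = (1 - 2*t)/(12*t^2) + 1/(3*(1 - 2*t)) := by
      field_simp; ring
    refine ⟨?_, ?_, ?_⟩
    · rw [hrx]; exact div_pos (by linarith) (by positivity)
    · rw [hrx]; exact div_pos (by linarith) (by positivity)
    · rw [hrz]; positivity
  · rintro ⟨h1, h2⟩
    have hz : (0:ℝ) < 1 - 2*t := by linarith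
    have hrx : 1/(2*t) - (1 - 2*t)/(12*t^2) = (8*t - 1)/(12*t^2) := by
      field_simp; ring
    have hrz : (1/12) * ((1 - 2*t)/t^2 - 2/(1 - 2*t)) + 1/(2*(1 - 2*t))
        = (1 - 2*t)/(12*t^2) + 1/(3*(1 - 2*t)) := by
      field_simp; ring
    constructor
    · rw [hrx]
      apply div_neg_of_neg_of_pos (by linarith) (by positivity)
    · rw [hrz]; positivity
end

section
/- Fix real m ≥ p > 0 and let r_z(t) = 1/(2(1-2t)) + (m/(4(m+2p)))((1-2t)/t^2 - 2/(1-2t)). Then r_z(t) > 0 for all t with 0 < t < 1/2. -/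
theorem stmt_10 (m p : ℝ) (hmp : m ≥ p) (hp : p > 0)
    (t : ℝ) (ht0 : 0 < t) (ht1 : t < 1/2) :
    1/(2*(1 - 2*t)) + (m/(4*(m + 2*p))) * ((1 - 2*t)/t^2 - 2/(1 - 2*t)) > 0 := by
  have hs : 0 < 1 - 2*t := by linarith
  have hm : 0 < m + 2*p := by linarith
  have hm0 : 0 ≤ m := by linarith
  rw [gt_iff_lt, ← sub_pos, sub_zero]
  have key : 1/(2*(1 - 2*t)) + (m/(4*(m + 2*p))) * ((1 - 2*t)/t^2 - 2/(1 - 2*t))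
      = (p/(m + 2*p)) * (1/(1 - 2*t))
        + (m/(4*(m + 2*p))) * ((1 - 2*t)/t^2) := by
    field_simp
    ring
  rw [key]
  have h1 : 0 < (p/(m + 2*p)) * (1/(1 - 2*t)) := by positivity
  have h2 : 0 ≤ (m/(4*(m + 2*p))) * ((1 - 2*t)/t^2) := by positivity
  linarith
end

section
/- For all real m ≥ p > 0 and all t ∈ (1/8, 1/3), the three Ricci eigenvalues r_x(t) = r_y(t) = 1/(2t) - p(1-2t)/(4t^2(m+2p)) and r_z(t) = 1/(2(1-2t)) + (m/(4(m+2p)))((1-2t)/t^2 - 2/(1-2t)) are all positive. In particular the interval (1/8,1/3) works uniformly, independently of m and p. -/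
theorem stmt_13 (m p : ℝ) (hmp : m ≥ p) (hp : p > 0)
    (t : ℝ) (ht0 : 1/8 < t) (ht1 : t < 1/3) :
    1/(2*t) - p*(1 - 2*t)/(4*t^2*(m + 2*p)) > 0 ∧
    1/(2*(1 - 2*t)) + (m/(4*(m + 2*p))) * ((1 - 2*t)/t^2 - 2/(1 - 2*t)) > 0 := by
  have ht : (0:ℝ) < t := by linarith
  have hs : (0:ℝ) < 1 - 2*t := by linarith
  have hm : (0:ℝ) < m := lt_of_lt_of_le hp hmp
  have hd : (0:ℝ) < m + 2*p := by linarith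
  constructor
  · have h1 : 1/(2*t) - p*(1 - 2*t)/(4*t^2*(m + 2*p))
        = (2*t*m + 6*t*p - p) / (4*t^2*(m + 2*p)) := by
      field_simp
      ring
    rw [h1]
    apply div_pos
    · nlinarith
    · positivity
  · have h2 : 1/(2*(1 - 2*t)) + (m/(4*(m + 2*p))) * ((1 - 2*t)/t^2 - 2/(1 - 2*t))
        = (4*p*t^2 + m*(1 - 2*t)^2) / (4*(m + 2*p)*t^2*(1 - 2*t)) := by
      field_simp
      ring
    rw [h2]
    apply div_pos
    · positivity
    · positivity
end

section
/- For the metric (t,t,1-2t) on SU(3)/T^2 with 3/10 < t < 1/2, for every a ∈ {0,1} and b,c ∈ {0,1,2} with 1 ≤ a+b+c ≤ 4, both expressions (1-2t)(-3b + c + 2(8a+5b-c)t) and (b+c)(1-4t) + 4(4a+b+c)t^2 are positive. -/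
set_option maxHeartbeats 2000000 in
theorem stmt_17 (t : ℝ) (ht0 : 3/10 < t) (ht1 : t < 1/2)
    (a b c : ℕ) (ha : a ≤ 1) (hb : b ≤ 2) (hc : c ≤ 2)
    (hd1 : 1 ≤ a + b + c) (hd4 : a + b + c ≤ 4) :
    (1 - 2*t)*(-3*(b:ℝ) + c + 2*(8*a + 5*b - (c:ℝ))*t) > 0 ∧
    ((b:ℝ) + c)*(1 - 4*t) + 4*(4*(a:ℝ) + b + c)*t^2 > 0 := by
  constructor <;>
  · interval_cases a <;> interval_cases b <;> interval_cases c <;> push_cast <;>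
      nlinarith [sq_nonneg (t - 3/10), sq_nonneg (2*t-1), mul_pos (sub_pos.2 ht0) (sub_pos.2 ht1)]
end

section
/- Let r_x(x,y,z) = 1/(2x) + (1/12)(x/(yz) - z/(xy) - y/(xz)), r_y = 1/(2y) + (1/12)(-x/(yz) - z/(xy) + y/(xz)), r_z = 1/(2z) + (1/12)(-x/(yz) + z/(xy) - y/(xz)). Then along the path (1/2, t, 1/2 - t) for t ∈ (0,1/2), all three of r_x, r_y, r_z are positive. -/
theorem stmt_18 (t : ℝ) (ht0 : 0 < t) (ht1 : t < 1/2) :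
    let x : ℝ := 1/2; let y := t; let z := 1/2 - t
    (1/(2*x) + (1/12)*(x/(y*z) - z/(x*y) - y/(x*z)) > 0) ∧
    (1/(2*y) + (1/12)*(-x/(y*z) - z/(x*y) + y/(x*z)) > 0) ∧
    (1/(2*z) + (1/12)*(-x/(y*z) + z/(x*y) - y/(x*z)) > 0) := by
  intro x y z
  simp only [x, y, z]
  have hz : (0:ℝ) < 1/2 - t := by linarith
  have ht0' : t ≠ 0 := ht0.ne'
  have hz' : (1/2 - t : ℝ) ≠ 0 := hz.ne'
  have hD : (0:ℝ) < 12 * (t * (1/2 - t)) := by positivity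
  have h1 : (1:ℝ) - 2*t ≠ 0 := by intro h; apply hz'; linarith
  have h2 : t - 2*t^2 ≠ 0 := by
    intro h
    apply ht0'
    nlinarith [mul_self_nonneg t]
  refine ⟨?_, ?_, ?_⟩
  · have h : (1/(2*(1/2:ℝ)) + (1/12)*((1/2)/(t*(1/2-t)) - (1/2-t)/((1/2)*t) - t/((1/2)*(1/2-t))))
        * (12 * (t * (1/2 - t))) = 8*t*(1-2*t) := by
      field_simp
      ring
    have hN : (0:ℝ) < 8*t*(1-2*t) := by nlinarith
    nlinarith [h, hD, hN]
  · have h : (1/(2*t) + (1/12)*(-(1/2:ℝ)/(t*(1/2-t)) - (1/2-t)/((1/2)*t) + t/((1/2)*(1/2-t))))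
        * (12 * (t * (1/2 - t))) = 2 - 4*t := by
      field_simp
      ring
    have hN : (0:ℝ) < 2 - 4*t := by linarith
    nlinarith [h, hD, hN]
  · have h : (1/(2*(1/2-t)) + (1/12)*(-(1/2:ℝ)/(t*(1/2-t)) + (1/2-t)/((1/2)*t) - t/((1/2)*(1/2-t))))
        * (12 * (t * (1/2 - t))) = 4*t := by
      field_simp
      ring
    have hN : (0:ℝ) < 4*t := by linarith
    nlinarith [h, hD, hN]
end
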